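/- arXiv:2412.02553 — 2 statements merged into one kernel-verified Lean document; each statement's English description precedes it below -/
import Mathlib

section
/- Let R : ℂⁿ × ℂⁿ × ℂⁿ × ℂⁿ → ℂ be ℂ-linear in the first and third arguments, conjugate-linear in the second and fourth, and symmetric under swapping the first pair with the second pair and under swapping the first and third arguments (Kähler symmetry). If R(v, v, v, v) ≤ κ|v|⁴ for all v ∈ ℂⁿ, then for the standard basis vectors eᵢ and nonnegative reals λ₁ ≥ ... ≥ λ_n, one has Σ_{i,j} λᵢ² λⱼ² R(eᵢ, eᵢ, eⱼ, eⱼ) ≤ (κ/2)((Σᵢλᵢ²)² + Σᵢλᵢ⁴), where the sum is over all i, j. -/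
noncomputable def zf (t : ZMod 4) : ℂ := Complex.I ^ t.val

lemma I_pow_mod (a : ℕ) : Complex.I ^ (a % 4) = Complex.I ^ a := by
  conv_rhs => rw [← Nat.div_add_mod a 4]
  rw [pow_add, pow_mul]
  norm_num [Complex.I_pow_four]

lemma zf_zero : zf 0 = 1 := rfl
lemma zf_one : zf 1 = Complex.I := by
  unfold zf; rw [show (1:ZMod 4).val = 1 from rfl, pow_one]
lemma zf_two : zf 2 = -1 := by
  unfold zf; rw [show (2:ZMod 4).val = 2 from rfl, Complex.I_sq]
lemma zf_three : zf 3 = -Complex.I := by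
  unfold zf; rw [show (3:ZMod 4).val = 3 from rfl, pow_succ, Complex.I_sq]; ring

lemma zf_add (s t : ZMod 4) : zf (s + t) = zf s * zf t := by
  unfold zf
  rw [ZMod.val_add, I_pow_mod, pow_add]

lemma zf_norm (t : ZMod 4) : ‖zf t‖ = 1 := by
  unfold zf
  rw [norm_pow, Complex.norm_I, one_pow]

lemma zf_ne_zero (t : ZMod 4) : zf t ≠ 0 := by
  intro h
  have := zf_norm t
  rw [h] at this; simp at this

lemma zf_conj (t : ZMod 4) : (starRingEnd ℂ) (zf t) = zf (-t) := by
  have h1 : zf (-t) * zf t = 1 := by rw [← zf_add, neg_add_cancel, zf_zero]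
  have h2 : (starRingEnd ℂ) (zf t) * zf t = 1 := by
    rw [mul_comm, Complex.mul_conj]
    norm_cast
    rw [← Complex.sq_norm]
    have := zf_norm t
    rw [this]; norm_num
  exact mul_right_cancel₀ (zf_ne_zero t) (h2.trans h1.symm)

lemma zf_sum {α : Type*} (s : Finset α) (f : α → ZMod 4) :
    zf (∑ m ∈ s, f m) = ∏ m ∈ s, zf (f m) := by
  induction s using Finset.cons_induction with
  | empty => simp [zf_zero]
  | cons a s ha ih => rw [Finset.sum_cons, Finset.prod_cons, zf_add, ih]

lemma zmod4_sum (g : ZMod 4 → ℂ) : ∑ t : ZMod 4, g t = g 0 + g 1 + g 2 + g 3 := by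
  have h4 : (Finset.univ : Finset (ZMod 4)) = {0,1,2,3} := by decide
  rw [h4, Finset.sum_insert (by decide), Finset.sum_insert (by decide),
    Finset.sum_insert (by decide), Finset.sum_singleton]
  ring

lemma char_one (c : ZMod 4) : ∑ t : ZMod 4, zf (c * t) = if c = 0 then 4 else 0 := by
  have hc : ∀ c : ZMod 4, c = 0 ∨ c = 1 ∨ c = 2 ∨ c = 3 := by decide
  rcases hc c with h | h | h | h <;> subst h <;> rw [zmod4_sum]
  · simp [zf_zero]; norm_num
  · rw [show (1:ZMod 4)*0 = 0 from rfl, show (1:ZMod 4)*1 = 1 from rfl,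
      show (1:ZMod 4)*2 = 2 from rfl, show (1:ZMod 4)*3 = 3 from rfl,
      zf_zero, zf_one, zf_two, zf_three, if_neg (by decide : ¬(1:ZMod 4) = 0)]
    ring
  · rw [show (2:ZMod 4)*0 = 0 from rfl, show (2:ZMod 4)*1 = 2 from rfl,
      show (2:ZMod 4)*2 = 0 from rfl, show (2:ZMod 4)*3 = 2 from rfl,
      zf_zero, zf_two, if_neg (by decide : ¬(2:ZMod 4) = 0)]
    ring
  · rw [show (3:ZMod 4)*0 = 0 from rfl, show (3:ZMod 4)*1 = 3 from rfl,
      show (3:ZMod 4)*2 = 2 from rfl, show (3:ZMod 4)*3 = 1 from rfl,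
      zf_zero, zf_one, zf_two, zf_three, if_neg (by decide : ¬(3:ZMod 4) = 0)]
    ring

lemma lin_sum {E : Type*} [AddCommMonoid E] [Module ℂ E] (f : E → ℂ)
    (hf : IsLinearMap ℂ f) {α : Type*} (s : Finset α) (c : α → ℂ) (u : α → E) :
    f (∑ i ∈ s, c i • u i) = ∑ i ∈ s, c i * f (u i) := by
  induction s using Finset.cons_induction with
  | empty => simpa using (hf.mk' f).map_zero
  | cons a s ha ih =>
      rw [Finset.sum_cons, Finset.sum_cons, hf.map_add, hf.map_smul, ih, smul_eq_mul]

lemma conjlin_sum {E : Type*} [AddCommMonoid E] [Module ℂ E] (f : E → ℂ)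
    (hf : ∀ (a : ℂ) w w', f (a • w + w') = (starRingEnd ℂ) a * f w + f w')
    {α : Type*} (s : Finset α) (c : α → ℂ) (u : α → E) :
    f (∑ i ∈ s, c i • u i) = ∑ i ∈ s, (starRingEnd ℂ) (c i) * f (u i) := by
  have h0 : f 0 = 0 := by
    have := hf 1 0 0
    simp at this
    exact this
  induction s using Finset.cons_induction with
  | empty => simpa using h0
  | cons a s ha ih => rw [Finset.sum_cons, Finset.sum_cons, hf, ih]

lemma count_eq {α : Type*} [DecidableEq α] (i j k l : α)
    (h : ∀ m : α, ((if m=i then (1:ℤ) else 0) + (if m=k then 1 else 0))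
        = ((if m=j then 1 else 0) + (if m=l then 1 else 0))) :
    (i=j ∧ k=l) ∨ (i=l ∧ k=j) := by
  have hi := h i; have hk := h k
  split_ifs at hi hk <;> subst_vars <;> first | omega | tauto

lemma char4 {n : ℕ} (i j k l : Fin n) :
    ∑ ε : Fin n → ZMod 4, zf (ε i - ε j + ε k - ε l)
      = if (i=j ∧ k=l) ∨ (i=l ∧ k=j) then (4:ℂ)^n else 0 := by
  classical
  set c : Fin n → ZMod 4 := fun m =>
    (if m = i then 1 else 0) - (if m = j then 1 else 0)
      + (if m = k then 1 else 0) - (if m = l then 1 else 0) with hc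
  have hφ : ∀ ε : Fin n → ZMod 4, ε i - ε j + ε k - ε l = ∑ m, c m * ε m := by
    intro ε
    simp [hc, sub_mul, add_mul, ite_mul, Finset.sum_sub_distrib,
      Finset.sum_add_distrib, Finset.sum_ite_eq']
  have step1 : ∑ ε : Fin n → ZMod 4, zf (ε i - ε j + ε k - ε l)
      = ∏ m, ∑ t : ZMod 4, zf (c m * t) := by
    rw [Finset.prod_univ_sum, ← Fintype.piFinset_univ]
    exact Finset.sum_congr rfl fun ε _ => by rw [hφ, zf_sum]
  rw [step1]
  simp only [char_one]
  by_cases hzero : ∀ m, c m = 0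
  · rw [if_pos, Finset.prod_congr rfl (fun m _ => if_pos (hzero m)),
      Finset.prod_const, Finset.card_univ, Fintype.card_fin]
    apply count_eq i j k l
    intro m
    have h0 := hzero m
    set a : ℤ := (if m=i then (1:ℤ) else 0) + (if m=k then 1 else 0) with ha
    set b : ℤ := (if m=j then (1:ℤ) else 0) + (if m=l then 1 else 0) with hb
    have hcast : ((a - b : ℤ) : ZMod 4) = c m := by
      simp [ha, hb, hc, apply_ite (fun z : ℤ => (z : ZMod 4))]
      ring
    rw [h0] at hcast
    have hdvd : (4:ℤ) ∣ (a - b) := by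
      have := (ZMod.intCast_zmod_eq_zero_iff_dvd (a - b) 4).mp hcast
      exact_mod_cast this
    have hab : 0 ≤ a ∧ a ≤ 2 ∧ 0 ≤ b ∧ b ≤ 2 := by
      constructor
      · rw [ha]; split_ifs <;> omega
      refine ⟨?_, ?_, ?_⟩
      · rw [ha]; split_ifs <;> omega
      · rw [hb]; split_ifs <;> omega
      · rw [hb]; split_ifs <;> omega
    omega
  · rw [if_neg]
    · obtain ⟨m, hm⟩ := not_forall.mp hzero
      exact Finset.prod_eq_zero (Finset.mem_univ m) (if_neg hm)
    · intro hcond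
      apply hzero
      intro m
      rcases hcond with ⟨h1, h2⟩ | ⟨h1, h2⟩ <;> subst h1 <;> subst h2 <;> simp [hc]

lemma collapse {α : Type*} [Fintype α] [DecidableEq α] (i k : α) (C : ℂ) (g : α → α → ℂ) :
    ∑ j, ∑ l, (if (i=j∧k=l)∨(i=l∧k=j) then C else 0) * g j l
      = C * g i k + C * g k i - (if i = k then C * g i i else 0) := by
  by_cases hik : i = k
  · subst hik
    have hcond : ∀ j l : α, ((i=j∧i=l)∨(i=l∧i=j)) ↔ (i=j ∧ i=l) := by tauto
    simp only [hcond, ite_and, ite_mul, zero_mul]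
    simp [Finset.sum_ite_eq]
  · have hsplit : ∀ j l : α, (if ((i=j∧k=l)∨(i=l∧k=j)) then C else 0)
        = (if i=j∧k=l then C else 0) + (if i=l∧k=j then C else 0) := by
      intro j l
      by_cases h1 : i=j∧k=l <;> by_cases h2 : i=l∧k=j
      · exact absurd (h1.1.trans h2.2.symm) hik
      · rw [if_pos (Or.inl h1), if_pos h1, if_neg h2, add_zero]
      · rw [if_pos (Or.inr h2), if_neg h1, if_pos h2, zero_add]
      · rw [if_neg (by tauto), if_neg h1, if_neg h2, add_zero]
    simp only [hsplit, add_mul, Finset.sum_add_distrib, ite_and, ite_mul, zero_mul]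
    simp [Finset.sum_ite_eq, hik]

lemma sum_comm5 {β γ : Type*} [Fintype β] [Fintype γ] (F : β → γ → γ → γ → γ → ℂ) :
    ∑ ε : β, ∑ i, ∑ j, ∑ k, ∑ l, F ε i j k l
      = ∑ i, ∑ j, ∑ k, ∑ l, ∑ ε, F ε i j k l := by
  rw [Finset.sum_comm]
  refine Finset.sum_congr rfl fun i _ => ?_
  rw [Finset.sum_comm]
  refine Finset.sum_congr rfl fun j _ => ?_
  rw [Finset.sum_comm]
  refine Finset.sum_congr rfl fun k _ => ?_
  rw [Finset.sum_comm]

lemma re_oR (r : ℝ) (z : ℂ) : ((r:ℂ) * z).re = r * z.re := by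
  simp [Complex.mul_re]

/-- Averaged holomorphic sectional curvature bound (inequality (4.7) in the paper). -/
theorem stmt3 (n : ℕ) (κ : ℝ)
    (R : EuclideanSpace ℂ (Fin n) → EuclideanSpace ℂ (Fin n) →
      EuclideanSpace ℂ (Fin n) → EuclideanSpace ℂ (Fin n) → ℂ)
    (hlin1 : ∀ w x y, IsLinearMap ℂ fun v => R v w x y)
    (hlin3 : ∀ v w y, IsLinearMap ℂ fun x => R v w x y)
    (hconj2 : ∀ v x y (a : ℂ) w w', R v (a • w + w') x y
      = (starRingEnd ℂ) a * R v w x y + R v w' x y)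
    (hconj4 : ∀ v w x (a : ℂ) y y', R v w x (a • y + y')
      = (starRingEnd ℂ) a * R v w x y + R v w x y')
    (hswap13 : ∀ v w x y, R v w x y = R x w v y)
    (hswappair : ∀ v w x y, R v w x y = R x y v w)
    (hHSC : ∀ v, (R v v v v).re ≤ κ * ‖v‖ ^ 4)
    (lam : Fin n → ℝ) (hpos : ∀ i, 0 ≤ lam i) (hmono : Antitone lam) :
    ∑ i, ∑ j, (lam i) ^ 2 * (lam j) ^ 2
        * (R (EuclideanSpace.single i 1) (EuclideanSpace.single i 1)
            (EuclideanSpace.single j 1) (EuclideanSpace.single j 1)).re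
      ≤ κ / 2 * ((∑ i, (lam i) ^ 2) ^ 2 + ∑ i, (lam i) ^ 4) := by
  classical
  set e : Fin n → EuclideanSpace ℂ (Fin n) := fun i => EuclideanSpace.single i (1:ℂ) with he
  have hee : ∀ i, EuclideanSpace.single i (1:ℂ) = e i := fun i => rfl
  simp only [hee]
  -- linear expansions in each slot
  have E1 : ∀ w x y (a : Fin n → ℂ), R (∑ i, a i • e i) w x y = ∑ i, a i * R (e i) w x y :=
    fun w x y a => lin_sum (fun v => R v w x y) (hlin1 w x y) Finset.univ a e
  have E2 : ∀ v x y (b : Fin n → ℂ), R v (∑ j, b j • e j) x y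
      = ∑ j, (starRingEnd ℂ) (b j) * R v (e j) x y :=
    fun v x y b => conjlin_sum (fun w => R v w x y)
      (fun a w w' => hconj2 v x y a w w') Finset.univ b e
  have E3 : ∀ v w y (c : Fin n → ℂ), R v w (∑ k, c k • e k) y = ∑ k, c k * R v w (e k) y :=
    fun v w y c => lin_sum (fun x => R v w x y) (hlin3 v w y) Finset.univ c e
  have E4 : ∀ v w x (d : Fin n → ℂ), R v w x (∑ l, d l • e l)
      = ∑ l, (starRingEnd ℂ) (d l) * R v w x (e l) :=
    fun v w x d => conjlin_sum (fun yy => R v w x yy)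
      (fun a yy yy' => hconj4 v w x a yy yy') Finset.univ d e
  have hexp : ∀ a b c d : Fin n → ℂ,
      R (∑ i, a i • e i) (∑ j, b j • e j) (∑ k, c k • e k) (∑ l, d l • e l)
        = ∑ i, a i * ∑ j, (starRingEnd ℂ) (b j) * ∑ k, c k * ∑ l, (starRingEnd ℂ) (d l)
            * R (e i) (e j) (e k) (e l) := by
    intro a b c d
    rw [E1]
    refine Finset.sum_congr rfl fun i _ => ?_
    rw [E2]
    congr 1
    refine Finset.sum_congr rfl fun j _ => ?_
    rw [E3]
    congr 1
    refine Finset.sum_congr rfl fun k _ => ?_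
    rw [E4]
  -- the averaged vectors
  set W : (Fin n → ZMod 4) → EuclideanSpace ℂ (Fin n) :=
    fun ε => ∑ m, (((lam m : ℂ)) * zf (ε m)) • e m with hW
  have hterm : ∀ ε : Fin n → ZMod 4,
      R (W ε) (W ε) (W ε) (W ε)
        = ∑ i, ∑ j, ∑ k, ∑ l, zf (ε i - ε j + ε k - ε l)
            * (((lam i * lam j * lam k * lam l : ℝ) : ℂ) * R (e i) (e j) (e k) (e l)) := by
    intro ε
    simp only [hW]
    rw [hexp]
    simp only [Finset.mul_sum]
    refine Finset.sum_congr rfl fun i _ => Finset.sum_congr rfl fun j _ =>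
      Finset.sum_congr rfl fun k _ => Finset.sum_congr rfl fun l _ => ?_
    have hz : zf (ε i - ε j + ε k - ε l)
        = zf (ε i) * zf (-(ε j)) * zf (ε k) * zf (-(ε l)) := by
      rw [show ε i - ε j + ε k - ε l = ε i + -(ε j) + (ε k + -(ε l)) by ring,
        zf_add, zf_add, zf_add]
      ring
    rw [map_mul, map_mul, Complex.conj_ofReal, Complex.conj_ofReal, zf_conj, zf_conj, hz]
    push_cast
    ring
  have hchar : ∀ i j k l : Fin n,
      ∑ ε : Fin n → ZMod 4, zf (ε i - ε j + ε k - ε l)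
          * (((lam i * lam j * lam k * lam l : ℝ) : ℂ) * R (e i) (e j) (e k) (e l))
        = (if (i=j ∧ k=l) ∨ (i=l ∧ k=j) then (4:ℂ)^n else 0)
          * (((lam i * lam j * lam k * lam l : ℝ) : ℂ) * R (e i) (e j) (e k) (e l)) := by
    intro i j k l
    rw [← Finset.sum_mul, char4]
  have hbig : ∑ ε : Fin n → ZMod 4, R (W ε) (W ε) (W ε) (W ε)
      = ∑ i, ∑ k,
          ((4:ℂ)^n * (((lam i * lam i * lam k * lam k : ℝ):ℂ) * R (e i) (e i) (e k) (e k))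
          + (4:ℂ)^n * (((lam i * lam k * lam k * lam i : ℝ):ℂ) * R (e i) (e k) (e k) (e i))
          - (if i = k then
              (4:ℂ)^n * (((lam i * lam i * lam k * lam i : ℝ):ℂ) * R (e i) (e i) (e k) (e i))
            else 0)) := by
    rw [Finset.sum_congr rfl fun ε _ => hterm ε, sum_comm5]
    refine Finset.sum_congr rfl fun i _ => ?_
    rw [Finset.sum_comm]
    refine Finset.sum_congr rfl fun k _ => ?_
    rw [Finset.sum_congr rfl fun j _ => Finset.sum_congr rfl fun l _ => hchar i j k l]
    exact collapse i k ((4:ℂ)^n)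
      (fun j l => ((lam i * lam j * lam k * lam l : ℝ):ℂ) * R (e i) (e j) (e k) (e l))
  -- canonical complex sums
  set S2C : ℂ := ∑ i, ∑ k, ((lam i^2 * lam k^2 : ℝ):ℂ) * R (e i) (e i) (e k) (e k) with hS2C
  set S4C : ℂ := ∑ i, ((lam i^4 : ℝ):ℂ) * R (e i) (e i) (e i) (e i) with hS4C
  have hA : ∑ i, ∑ k, (4:ℂ)^n * (((lam i * lam i * lam k * lam k : ℝ):ℂ)
        * R (e i) (e i) (e k) (e k)) = (4:ℂ)^n * S2C := by
    rw [hS2C, Finset.mul_sum]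
    refine Finset.sum_congr rfl fun i _ => ?_
    rw [Finset.mul_sum]
    refine Finset.sum_congr rfl fun k _ => ?_
    push_cast
    ring
  have hB : ∑ i, ∑ k, (4:ℂ)^n * (((lam i * lam k * lam k * lam i : ℝ):ℂ)
        * R (e i) (e k) (e k) (e i)) = (4:ℂ)^n * S2C := by
    have hstep : ∀ i k : Fin n, (4:ℂ)^n * (((lam i * lam k * lam k * lam i : ℝ):ℂ)
          * R (e i) (e k) (e k) (e i))
        = (4:ℂ)^n * (((lam k^2 * lam i^2 : ℝ):ℂ) * R (e k) (e k) (e i) (e i)) := by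
      intro i k
      rw [hswap13 (e i) (e k) (e k) (e i)]
      push_cast
      ring
    rw [Finset.sum_congr rfl fun i _ => Finset.sum_congr rfl fun k _ => hstep i k,
      Finset.sum_comm, hS2C, Finset.mul_sum]
    refine Finset.sum_congr rfl fun i _ => ?_
    rw [Finset.mul_sum]
  have hD : ∑ i, ∑ k, (if i = k then
        (4:ℂ)^n * (((lam i * lam i * lam k * lam i : ℝ):ℂ) * R (e i) (e i) (e k) (e i))
      else 0) = (4:ℂ)^n * S4C := by
    rw [Finset.sum_congr rfl fun i _ => Finset.sum_ite_eq Finset.univ i _]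
    simp only [Finset.mem_univ, if_true]
    rw [hS4C, Finset.mul_sum]
    refine Finset.sum_congr rfl fun i _ => ?_
    push_cast
    ring
  have hbig2 : ∑ ε : Fin n → ZMod 4, R (W ε) (W ε) (W ε) (W ε)
      = (4:ℂ)^n * (2 * S2C - S4C) := by
    rw [hbig]
    simp only [Finset.sum_add_distrib, Finset.sum_sub_distrib]
    rw [hA, hB, hD]
    ring
  -- real parts
  have hS2Cre : S2C.re = ∑ i, ∑ k, lam i^2 * lam k^2 * (R (e i) (e i) (e k) (e k)).re := by
    rw [hS2C, Complex.re_sum]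
    refine Finset.sum_congr rfl fun i _ => ?_
    rw [Complex.re_sum]
    exact Finset.sum_congr rfl fun k _ => by rw [re_oR]
  have hS4Cre : S4C.re = ∑ i, lam i^4 * (R (e i) (e i) (e i) (e i)).re := by
    rw [hS4C, Complex.re_sum]
    exact Finset.sum_congr rfl fun i _ => by rw [re_oR]
  have hre2 : (∑ ε : Fin n → ZMod 4, R (W ε) (W ε) (W ε) (W ε)).re
      = (4:ℝ)^n * (2 * S2C.re - S4C.re) := by
    rw [hbig2, show ((4:ℂ)^n) = (((4:ℝ)^n : ℝ) : ℂ) by push_cast; ring, re_oR]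
    simp [Complex.sub_re, Complex.mul_re]
  -- upper bound via HSC
  have hWnorm : ∀ ε : Fin n → ZMod 4, ‖W ε‖^2 = ∑ i, lam i^2 := by
    intro ε
    have hco : ∀ j, (W ε) j = (lam j : ℂ) * zf (ε j) := by
      intro j
      simp only [hW]
      rw [WithLp.ofLp_sum, Finset.sum_apply]
      simp [EuclideanSpace.single_apply, he]
    rw [EuclideanSpace.norm_eq, Real.sq_sqrt (by positivity)]
    refine Finset.sum_congr rfl fun j _ => ?_
    rw [hco, norm_mul, zf_norm, mul_one, Complex.norm_real, Real.norm_eq_abs, sq_abs]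
  have hub : (∑ ε : Fin n → ZMod 4, R (W ε) (W ε) (W ε) (W ε)).re
      ≤ (4:ℝ)^n * (κ * (∑ i, lam i^2)^2) := by
    rw [Complex.re_sum]
    have hb : ∀ ε : Fin n → ZMod 4,
        (R (W ε) (W ε) (W ε) (W ε)).re ≤ κ * (∑ i, lam i^2)^2 := by
      intro ε
      have h4 := hHSC (W ε)
      have hn4 : ‖W ε‖^4 = (∑ i, lam i^2)^2 := by
        rw [show (4:ℕ) = 2*2 from rfl, pow_mul, hWnorm]
      rwa [hn4] at h4
    calc ∑ ε : Fin n → ZMod 4, (R (W ε) (W ε) (W ε) (W ε)).re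
        ≤ ∑ _ε : Fin n → ZMod 4, κ * (∑ i, lam i^2)^2 :=
          Finset.sum_le_sum fun ε _ => hb ε
      _ = (4:ℝ)^n * (κ * (∑ i, lam i^2)^2) := by
          rw [Finset.sum_const, Finset.card_univ, nsmul_eq_mul]
          congr 1
          rw [Fintype.card_fun]
          push_cast [ZMod.card, Fintype.card_fin]
          ring
  have hDre : ∑ i, lam i^4 * (R (e i) (e i) (e i) (e i)).re ≤ κ * ∑ i, lam i^4 := by
    rw [Finset.mul_sum]
    refine Finset.sum_le_sum fun i _ => ?_
    have hH := hHSC (e i)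
    have he1 : ‖e i‖ = 1 := by simp [he, EuclideanSpace.norm_single]
    rw [he1] at hH
    norm_num at hH
    have h4 : (0:ℝ) ≤ lam i^4 := by positivity
    calc lam i^4 * (R (e i) (e i) (e i) (e i)).re ≤ lam i^4 * κ :=
        mul_le_mul_of_nonneg_left hH h4
      _ = κ * lam i^4 := mul_comm _ _
  have h4pos : (0:ℝ) < (4:ℝ)^n := by positivity
  have h' : (4:ℝ)^n * (2 * S2C.re - S4C.re) ≤ (4:ℝ)^n * (κ * (∑ i, lam i^2)^2) := by
    rw [← hre2]; exact hub
  have hkey : 2 * S2C.re - S4C.re ≤ κ * (∑ i, lam i^2)^2 :=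
    le_of_mul_le_mul_left h' h4pos
  have h2 : S4C.re ≤ κ * ∑ i, lam i^4 := hS4Cre ▸ hDre
  rw [← hS2Cre]
  linarith
end

section
/- Suppose u : M → ℝ is smooth with sup u = +∞ on a manifold M, ε > 0, v = 1/√(u+ε), and there is a sequence of points p_k with v(p_k) → 0, |∇v|(p_k) → 0, and liminf Δv(p_k) ≥ 0. If additionally Δu ≥ c·u² everywhere for a constant c, then c ≤ 0. -/
/-- The Euclidean Laplacian of a function on `ℝⁿ`. -/
noncomputable def lap {n : ℕ} (f : EuclideanSpace ℝ (Fin n) → ℝ)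
    (x : EuclideanSpace ℝ (Fin n)) : ℝ :=
  ∑ i, fderiv ℝ (fun y => fderiv ℝ f y (EuclideanSpace.single i 1)) x
    (EuclideanSpace.single i 1)

open Filter Set

section Aux

lemma key1d (g d : ℝ → ℝ) (δ D : ℝ) (hδ : 0 < δ)
    (hdiff : ∀ t ∈ Set.Ioo (-δ) δ, HasDerivAt g (d t) t)
    (hmax : ∀ t ∈ Set.Ioo (-δ) δ, g t ≤ g 0)
    (hd0 : HasDerivAt d D 0) : D ≤ 0 := by
  have h0mem : (0:ℝ) ∈ Set.Ioo (-δ) δ := ⟨by linarith, hδ⟩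
  have hIoo_nhds : Set.Ioo (-δ) δ ∈ nhds (0:ℝ) := Ioo_mem_nhds (by linarith) hδ
  have hlocmax : IsLocalMax g 0 := eventually_of_mem hIoo_nhds hmax
  have hd00 : d 0 = 0 := by
    have := hlocmax.deriv_eq_zero
    rwa [(hdiff 0 h0mem).deriv] at this
  have hslope : Tendsto (fun t => d t / t) (nhdsWithin 0 (Set.Ioi 0)) (nhds D) := by
    have h := hasDerivAt_iff_tendsto_slope.mp hd0
    have h2 : Tendsto (slope d 0) (nhdsWithin 0 (Set.Ioi 0)) (nhds D) :=
      h.mono_left (nhdsWithin_mono _ (fun t ht => by simpa using ne_of_gt ht))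
    refine h2.congr (fun t => ?_)
    rw [slope_def_field, hd00, sub_zero, sub_zero]
  have hfreq : ∃ᶠ t in nhdsWithin 0 (Set.Ioi 0), d t ≤ 0 := by
    rw [Filter.frequently_iff]
    intro U hU
    obtain ⟨u', hu', hsub⟩ := mem_nhdsGT_iff_exists_Ioo_subset.mp hU
    have hu'0 : (0:ℝ) < u' := hu'
    set t := min u' δ / 2 with ht
    have htpos : 0 < t := by
      have : (0:ℝ) < min u' δ := lt_min hu'0 hδ
      linarith
    have htu' : t < u' := by
      have h1 : min u' δ ≤ u' := min_le_left _ _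
      linarith
    have htδ : t < δ := by
      have h1 : min u' δ ≤ δ := min_le_right _ _
      linarith
    have hcont : ContinuousOn g (Set.Icc 0 t) := by
      intro x hx
      have hxm : x ∈ Set.Ioo (-δ) δ := ⟨by linarith [hx.1], by linarith [hx.2]⟩
      exact ((hdiff x hxm).differentiableAt.continuousAt).continuousWithinAt
    have hderivs : ∀ x ∈ Set.Ioo 0 t, HasDerivAt g (d x) x := fun x hx =>
      hdiff x ⟨by linarith [hx.1], by linarith [hx.2]⟩
    obtain ⟨ξ, hξ, hξslope⟩ := exists_hasDerivAt_eq_slope g d htpos hcont hderivs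
    refine ⟨ξ, hsub ⟨hξ.1, lt_trans hξ.2 htu'⟩, ?_⟩
    rw [hξslope]
    have hgt : g t ≤ g 0 := hmax t ⟨by linarith, htδ⟩
    apply div_nonpos_of_nonpos_of_nonneg <;> linarith
  by_contra hD
  push_neg at hD
  have hev : ∀ᶠ t in nhdsWithin 0 (Set.Ioi 0), 0 < d t / t :=
    hslope.eventually (Ioi_mem_nhds hD)
  have hself : ∀ᶠ t in nhdsWithin 0 (Set.Ioi 0), (0:ℝ) < t :=
    eventually_mem_nhdsWithin
  obtain ⟨t, h1, h2, h3⟩ := (hfreq.and_eventually (hev.and hself)).exists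
  have : d t / t ≤ 0 := div_nonpos_of_nonpos_of_nonneg h1 (le_of_lt h3)
  linarith

lemma sdtest {n : ℕ} (φ : EuclideanSpace ℝ (Fin n) → ℝ) (x₀ : EuclideanSpace ℝ (Fin n))
    (δ : ℝ) (hδ : 0 < δ)
    (hdiff : ∀ x ∈ Metric.ball x₀ δ, DifferentiableAt ℝ φ x)
    (hdiff2 : ∀ i, DifferentiableAt ℝ
      (fun y => fderiv ℝ φ y (EuclideanSpace.single i 1)) x₀)
    (hmax : ∀ x ∈ Metric.ball x₀ δ, φ x ≤ φ x₀) : lap φ x₀ ≤ 0 := by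
  have : ∀ i : Fin n, fderiv ℝ (fun y => fderiv ℝ φ y (EuclideanSpace.single i 1)) x₀
      (EuclideanSpace.single i 1) ≤ 0 := by
    intro i
    set e := (EuclideanSpace.single i (1:ℝ)) with he
    have hne : ‖e‖ = 1 := by rw [he, EuclideanSpace.norm_single]; norm_num
    set line : ℝ → EuclideanSpace ℝ (Fin n) := fun t => x₀ + t • e with hline
    have hline0 : line 0 = x₀ := by simp [hline]
    have hlinemem : ∀ t ∈ Set.Ioo (-δ) δ, line t ∈ Metric.ball x₀ δ := by
      intro t ht
      simp only [Metric.mem_ball, hline, dist_eq_norm]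
      rw [show x₀ + t • e - x₀ = t • e by abel, norm_smul, hne]
      simp only [mul_one, Real.norm_eq_abs]
      exact abs_lt.mpr ⟨ht.1, ht.2⟩
    have hlinederiv : ∀ t : ℝ, HasDerivAt line e t := by
      intro t
      simpa [hline] using ((hasDerivAt_id t).smul_const e).const_add x₀
    set g : ℝ → ℝ := fun t => φ (line t) with hg
    set d : ℝ → ℝ := fun t => fderiv ℝ φ (line t) e with hd
    have hgderiv : ∀ t ∈ Set.Ioo (-δ) δ, HasDerivAt g (d t) t := by
      intro t ht
      have h1 : HasFDerivAt φ (fderiv ℝ φ (line t)) (line t) :=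
        (hdiff _ (hlinemem t ht)).hasFDerivAt
      have := h1.comp_hasDerivAt t (hlinederiv t)
      exact this
    set ψ : EuclideanSpace ℝ (Fin n) → ℝ := fun y => fderiv ℝ φ y e with hψ
    have hψd : HasDerivAt d (fderiv ℝ ψ x₀ e) 0 := by
      have h1 : HasFDerivAt ψ (fderiv ℝ ψ x₀) (line 0) := by
        rw [hline0]; exact (hdiff2 i).hasFDerivAt
      have := h1.comp_hasDerivAt 0 (hlinederiv 0)
      exact this
    have hgmax : ∀ t ∈ Set.Ioo (-δ) δ, g t ≤ g 0 := by
      intro t ht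
      rw [hg]
      simp only [hline0]
      exact hmax _ (hlinemem t ht)
    exact key1d g d δ _ hδ hgderiv hgmax hψd
  exact Finset.sum_nonpos (fun i _ => this i)

lemma hd_g (A ρ t : ℝ) (h : ρ - t ≠ 0) :
    HasDerivAt (fun t => A / (ρ - t)^2) (2*A/(ρ-t)^3) t := by
  have h1 : HasDerivAt (fun t : ℝ => ρ - t) (-1) t := by
    simpa using (hasDerivAt_id t).const_sub ρ
  have h4 := ((h1.pow 2).inv (pow_ne_zero 2 h)).const_mul A
  have hfun : (fun t : ℝ => A / (ρ - t)^2) = fun t => A * ((ρ - t)^2)⁻¹ := by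
    funext t; rw [div_eq_mul_inv]
  rw [hfun]
  refine h4.congr_deriv ?_
  simp only [Pi.pow_apply]
  field_simp
  ring

lemma hd_g1 (A ρ t : ℝ) (h : ρ - t ≠ 0) :
    HasDerivAt (fun t => 2*A / (ρ - t)^3) (6*A/(ρ-t)^4) t := by
  have h1 : HasDerivAt (fun t : ℝ => ρ - t) (-1) t := by
    simpa using (hasDerivAt_id t).const_sub ρ
  have h4 := ((h1.pow 3).inv (pow_ne_zero 3 h)).const_mul (2*A)
  have hfun : (fun t : ℝ => 2*A / (ρ - t)^3) = fun t => 2*A * ((ρ - t)^3)⁻¹ := by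
    funext t; rw [div_eq_mul_inv]
  rw [hfun]
  refine h4.congr_deriv ?_
  simp only [Pi.pow_apply]
  field_simp
  ring

lemma hs_fderiv {n : ℕ} (x : EuclideanSpace ℝ (Fin n)) :
    HasFDerivAt (fun y : EuclideanSpace ℝ (Fin n) => ∑ i, (y i)^2)
      (∑ i, (2 * x i) • (EuclideanSpace.proj i : EuclideanSpace ℝ (Fin n) →L[ℝ] ℝ)) x := by
  apply HasFDerivAt.fun_sum
  intro i _
  have hp : HasFDerivAt (fun y : EuclideanSpace ℝ (Fin n) => y i)
      (EuclideanSpace.proj i : EuclideanSpace ℝ (Fin n) →L[ℝ] ℝ) x :=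
    (EuclideanSpace.proj (𝕜 := ℝ) (ι := Fin n) i).hasFDerivAt
  have h2 := hp.mul hp
  have hfun : (fun y : EuclideanSpace ℝ (Fin n) => (y i)^2) = fun y => y i * y i := by
    funext y; ring
  rw [hfun]
  rw [two_mul, add_smul]
  exact h2

lemma sder_apply {n : ℕ} (x : EuclideanSpace ℝ (Fin n)) (j : Fin n) :
    (∑ i, (2 * x i) • (EuclideanSpace.proj i : EuclideanSpace ℝ (Fin n) →L[ℝ] ℝ))
      (EuclideanSpace.single j 1) = 2 * x j := by
  rw [ContinuousLinearMap.sum_apply]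
  have : ∀ i, ((2 * x i) • (EuclideanSpace.proj i : EuclideanSpace ℝ (Fin n) →L[ℝ] ℝ))
      (EuclideanSpace.single j 1) = (2 * x i) * (if i = j then 1 else 0) := by
    intro i
    simp [EuclideanSpace.single_apply, eq_comm]
  rw [Finset.sum_congr rfl (fun i _ => this i)]
  simp

lemma scont {n : ℕ} : Continuous (fun y : EuclideanSpace ℝ (Fin n) => ∑ i, (y i)^2) := by
  apply continuous_finset_sum
  intro i _
  exact ((EuclideanSpace.proj (𝕜 := ℝ) (ι := Fin n) i).continuous).pow 2

lemma snonneg {n : ℕ} (x : EuclideanSpace ℝ (Fin n)) : 0 ≤ ∑ i, (x i)^2 :=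
  Finset.sum_nonneg (fun i _ => sq_nonneg _)

lemma snorm {n : ℕ} (x : EuclideanSpace ℝ (Fin n)) :
    ‖x‖ = Real.sqrt (∑ i, (x i)^2) := by
  rw [EuclideanSpace.norm_eq]
  congr 1
  apply Finset.sum_congr rfl
  intro i _
  rw [Real.norm_eq_abs, sq_abs]

set_option maxHeartbeats 1000000 in
/-- The key barrier comparison: if `c > 0` and `Δu ≥ c u²`, then `u` is dominated on the
ball of radius `√ρ` by the barrier `A/(ρ - |x|²)²` with `A = 4(n+6)ρ/c`. -/
lemma comparison {n : ℕ} (u : EuclideanSpace ℝ (Fin n) → ℝ)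
    (hu : ContDiff ℝ (⊤ : ℕ∞) u) (c ρ : ℝ) (hc0 : 0 < c) (hρ : 0 < ρ)
    (hc : ∀ x, c * (u x) ^ 2 ≤ lap u x) :
    ∀ x, (∑ i, (x i)^2) < ρ → u x ≤ (4*(n+6)*ρ/c) / (ρ - ∑ i, (x i)^2)^2 := by
  classical
  set s : EuclideanSpace ℝ (Fin n) → ℝ := fun y => ∑ i, (y i)^2 with hs_def
  set A : ℝ := 4*(n+6)*ρ/c with hA_def
  have hApos : 0 < A := by
    apply div_pos _ hc0
    have : (0:ℝ) ≤ (n:ℝ) := Nat.cast_nonneg n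
    nlinarith
  set w : EuclideanSpace ℝ (Fin n) → ℝ := fun y => A / (ρ - s y)^2 with hw_def
  by_contra hcon
  push_neg at hcon
  obtain ⟨y, hy1, hy2⟩ := hcon
  have hy1' : s y < ρ := hy1
  have hy2' : w y < u y := hy2
  -- max of u on the closed ball
  have hmemK : ∀ x : EuclideanSpace ℝ (Fin n), s x ≤ ρ →
      x ∈ Metric.closedBall (0 : EuclideanSpace ℝ (Fin n)) (Real.sqrt ρ) := by
    intro x hx
    rw [Metric.mem_closedBall, dist_zero_right, snorm]
    exact Real.sqrt_le_sqrt hx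
  obtain ⟨zm, hzmK, hzm⟩ :=
    (isCompact_closedBall (0 : EuclideanSpace ℝ (Fin n)) (Real.sqrt ρ)).exists_isMaxOn
      ⟨0, Metric.mem_closedBall_self (Real.sqrt_nonneg ρ)⟩
      ((hu.continuous).continuousOn)
  set C : ℝ := u zm with hC_def
  have hCb : ∀ x, s x ≤ ρ → u x ≤ C := fun x hx => hzm (hmemK x hx)
  have hwy : 0 < w y := by
    apply div_pos hApos
    have : 0 < ρ - s y := by linarith
    positivity
  have hCpos : 0 < C := lt_of_lt_of_le (lt_trans hwy hy2') (hCb y (le_of_lt hy1'))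
  set β : ℝ := Real.sqrt (A / C) with hβ_def
  have hβpos : 0 < β := Real.sqrt_pos.mpr (div_pos hApos hCpos)
  set β' : ℝ := min β (ρ - s y) with hβ'_def
  have hβ'pos : 0 < β' := lt_min hβpos (by linarith)
  have hβ'β : β' ≤ β := min_le_left _ _
  have hβ'y : β' ≤ ρ - s y := min_le_right _ _
  set K' : Set (EuclideanSpace ℝ (Fin n)) := {x | s x ≤ ρ - β'} with hK'_def
  have hK'closed : IsClosed K' := isClosed_le scont continuous_const
  have hK'cpt : IsCompact K' :=
    IsCompact.of_isClosed_subset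
      (isCompact_closedBall (0 : EuclideanSpace ℝ (Fin n)) (Real.sqrt ρ))
      hK'closed (fun x hx => hmemK x (by have := hx; simp only [hK'_def, Set.mem_setOf_eq] at this; linarith))
  have hyK' : y ∈ K' := by simp only [hK'_def, Set.mem_setOf_eq]; linarith
  have hφcont : ContinuousOn (fun x => u x - w x) K' := by
    apply ContinuousOn.sub (hu.continuous.continuousOn)
    apply ContinuousOn.div continuousOn_const
    · exact ((continuous_const.sub scont).pow 2).continuousOn
    · intro x hx
      simp only [hK'_def, Set.mem_setOf_eq] at hx
      have : 0 < ρ - s x := by linarith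
      positivity
  obtain ⟨x₀, hx₀K', hx₀max⟩ := hK'cpt.exists_isMaxOn ⟨y, hyK'⟩ hφcont
  simp only [hK'_def, Set.mem_setOf_eq] at hx₀K'
  have hx₀ρ : s x₀ < ρ := by linarith
  have hφx₀pos : 0 < u x₀ - w x₀ := by
    have h5 : u y - w y ≤ u x₀ - w x₀ := hx₀max hyK'
    linarith
  -- the open ball
  set B : Set (EuclideanSpace ℝ (Fin n)) := {x | s x < ρ} with hB_def
  have hBopen : IsOpen B := isOpen_lt scont continuous_const
  have hx₀B : x₀ ∈ B := by simp only [hB_def, Set.mem_setOf_eq]; exact hx₀ρ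
  -- global max over B
  have hglobal : ∀ x ∈ B, u x - w x ≤ u x₀ - w x₀ := by
    intro x hx
    simp only [hB_def, Set.mem_setOf_eq] at hx
    by_cases hxK' : s x ≤ ρ - β'
    · have : x ∈ K' := by simp only [hK'_def, Set.mem_setOf_eq]; exact hxK'
      exact hx₀max this
    · push_neg at hxK'
      set D : ℝ := ρ - s x with hD_def
      have hD1 : 0 < D := by linarith
      have hD2 : D < β := by
        have : D < β' := by simp only [hD_def]; linarith
        linarith
      have hDsq : D^2 < A / C := by
        have h1 : D^2 < β^2 := by nlinarith
        have h2 : β^2 = A / C := Real.sq_sqrt (le_of_lt (div_pos hApos hCpos))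
        exact lt_of_lt_of_eq h1 h2
      have hCD : C * D^2 < A := by
        rw [lt_div_iff₀ hCpos] at hDsq
        nlinarith
      have hwx : C < w x := by
        rw [hw_def]
        simp only
        rw [lt_div_iff₀ (by positivity)]
        calc C * (ρ - s x)^2 = C * D^2 := by rw [hD_def]
        _ < A := hCD
      have hux : u x ≤ C := hCb x (le_of_lt hx)
      linarith
  obtain ⟨δ, hδpos, hδsub⟩ := Metric.isOpen_iff.mp hBopen x₀ hx₀B
  -- derivative facts
  have hDx₀ : 0 < ρ - s x₀ := by linarith
  have hw_has : ∀ x ∈ B, HasFDerivAt w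
      ((2*A/(ρ - s x)^3) •
        (∑ i, (2 * x i) • (EuclideanSpace.proj i : EuclideanSpace ℝ (Fin n) →L[ℝ] ℝ))) x := by
    intro x hx
    simp only [hB_def, Set.mem_setOf_eq] at hx
    have hne : ρ - s x ≠ 0 := ne_of_gt (by linarith)
    have := (hd_g A ρ (s x) hne).comp_hasFDerivAt x (hs_fderiv x)
    exact this
  have hwfderiv_i : ∀ x ∈ B, ∀ i, fderiv ℝ w x (EuclideanSpace.single i 1)
      = (2*A/(ρ - s x)^3) * (2 * x i) := by
    intro x hx i
    rw [(hw_has x hx).fderiv]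
    rw [ContinuousLinearMap.smul_apply, sder_apply]
    simp [smul_eq_mul]
  have hudiff : Differentiable ℝ u := hu.differentiable (by simp)
  have hwdiff : ∀ x ∈ B, DifferentiableAt ℝ w x := fun x hx => (hw_has x hx).differentiableAt
  -- eventual formula for fderiv of u - w
  have hueq : ∀ i : Fin n, (fun x => fderiv ℝ (fun z => u z - w z) x (EuclideanSpace.single i 1))
      =ᶠ[nhds x₀]
      (fun x => fderiv ℝ u x (EuclideanSpace.single i 1) - (2*A/(ρ - s x)^3) * (2 * x i)) := by
    intro i
    apply eventually_of_mem (hBopen.mem_nhds hx₀B)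
    intro x hx
    show fderiv ℝ (fun z => u z - w z) x (EuclideanSpace.single i 1)
      = fderiv ℝ u x (EuclideanSpace.single i 1) - (2*A/(ρ - s x)^3) * (2 * x i)
    rw [fderiv_fun_sub (hudiff x) (hwdiff x hx), ContinuousLinearMap.sub_apply,
      hwfderiv_i x hx i]
  -- differentiability of the derivative pieces
  have hu' : ContDiff ℝ (⊤ : ℕ∞) (fderiv ℝ u) := hu.fderiv_right (by simp)
  have hudiff_i : ∀ (i : Fin n) (x : EuclideanSpace ℝ (Fin n)),
      DifferentiableAt ℝ (fun y => fderiv ℝ u y (EuclideanSpace.single i 1)) x := by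
    intro i x
    have h1 : DifferentiableAt ℝ (fderiv ℝ u) x := (hu'.differentiable (by simp)).differentiableAt
    exact ((ContinuousLinearMap.apply ℝ ℝ
      (EuclideanSpace.single i 1 : EuclideanSpace ℝ (Fin n))).differentiableAt).comp x h1
  have hW_has : ∀ i : Fin n, HasFDerivAt (fun x => (2*A/(ρ - s x)^3) * (2 * x i))
      (((2*A/(ρ - s x₀)^3) •
          (2 • (EuclideanSpace.proj i : EuclideanSpace ℝ (Fin n) →L[ℝ] ℝ)))
        + ((2 * x₀ i) • ((6*A/(ρ - s x₀)^4) •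
          (∑ j, (2 * x₀ j) • (EuclideanSpace.proj j : EuclideanSpace ℝ (Fin n) →L[ℝ] ℝ))))) x₀ := by
    intro i
    have hne : ρ - s x₀ ≠ 0 := ne_of_gt hDx₀
    have hc' : HasFDerivAt (fun x => 2*A/(ρ - s x)^3)
        ((6*A/(ρ - s x₀)^4) •
          (∑ j, (2 * x₀ j) • (EuclideanSpace.proj j : EuclideanSpace ℝ (Fin n) →L[ℝ] ℝ))) x₀ :=
      (hd_g1 A ρ (s x₀) hne).comp_hasFDerivAt x₀ (hs_fderiv x₀)
    have hp : HasFDerivAt (fun y : EuclideanSpace ℝ (Fin n) => y i)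
        (EuclideanSpace.proj i : EuclideanSpace ℝ (Fin n) →L[ℝ] ℝ) x₀ :=
      (EuclideanSpace.proj (𝕜 := ℝ) (ι := Fin n) i).hasFDerivAt
    have hd' : HasFDerivAt (fun x : EuclideanSpace ℝ (Fin n) => 2 * x i)
        (2 • (EuclideanSpace.proj i : EuclideanSpace ℝ (Fin n) →L[ℝ] ℝ)) x₀ := by
      simpa [two_smul, two_mul] using hp.const_mul 2
    exact hc'.mul hd'
  -- second derivative of the W piece in direction e i
  have hWval : ∀ i : Fin n,
      fderiv ℝ (fun x => (2*A/(ρ - s x)^3) * (2 * x i)) x₀ (EuclideanSpace.single i 1)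
      = 2*(2*A/(ρ - s x₀)^3) + 4*(x₀ i)^2*(6*A/(ρ - s x₀)^4) := by
    intro i
    have hproj : (EuclideanSpace.proj (𝕜 := ℝ) (ι := Fin n) i)
        (EuclideanSpace.single i 1) = 1 := by
      simp [EuclideanSpace.single_apply]
    rw [(hW_has i).fderiv]
    simp only [ContinuousLinearMap.add_apply, ContinuousLinearMap.smul_apply]
    rw [sder_apply, hproj]
    simp only [smul_eq_mul]
    ring
  -- apply the second derivative test to φ = u - w
  set φ : EuclideanSpace ℝ (Fin n) → ℝ := fun z => u z - w z with hφ_def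
  have hφdiff : ∀ x ∈ Metric.ball x₀ δ, DifferentiableAt ℝ φ x := by
    intro x hx
    exact (hudiff x).sub (hwdiff x (hδsub hx))
  have hφdiff2 : ∀ i, DifferentiableAt ℝ
      (fun y => fderiv ℝ φ y (EuclideanSpace.single i 1)) x₀ := by
    intro i
    rw [Filter.EventuallyEq.differentiableAt_iff (hueq i)]
    exact (hudiff_i i x₀).sub (hW_has i).differentiableAt
  have hφmax : ∀ x ∈ Metric.ball x₀ δ, φ x ≤ φ x₀ := fun x hx => hglobal x (hδsub hx)
  have hlapφ : lap φ x₀ ≤ 0 := sdtest φ x₀ δ hδpos hφdiff hφdiff2 hφmax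
  -- compute lap φ x₀
  have hlapφ_eq : lap φ x₀ = lap u x₀ -
      ∑ i, (2*(2*A/(ρ - s x₀)^3) + 4*(x₀ i)^2*(6*A/(ρ - s x₀)^4)) := by
    rw [lap, lap, ← Finset.sum_sub_distrib]
    apply Finset.sum_congr rfl
    intro i _
    rw [Filter.EventuallyEq.fderiv_eq (hueq i)]
    rw [fderiv_fun_sub (hudiff_i i x₀) (hW_has i).differentiableAt,
      ContinuousLinearMap.sub_apply, hWval i]
  -- final arithmetic
  set D : ℝ := ρ - s x₀ with hDD
  have hsum : ∑ i, (2*(2*A/D^3) + 4*(x₀ i)^2*(6*A/D^4))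
      = n * (2*(2*A/D^3)) + (s x₀) * (4*(6*A/D^4)) := by
    rw [Finset.sum_add_distrib, Finset.sum_const, Finset.card_univ, Fintype.card_fin]
    simp only [hs_def, nsmul_eq_mul]
    rw [Finset.sum_mul]
    congr 1
    apply Finset.sum_congr rfl
    intro i _
    ring
  have hlapu : c * (u x₀)^2 ≤ lap u x₀ := hc x₀
  have hlapu2 : lap u x₀ ≤ n * (2*(2*A/D^3)) + (s x₀) * (4*(6*A/D^4)) := by
    rw [← hsum]
    have := hlapφ
    rw [hlapφ_eq] at this
    linarith
  have hwx₀ : w x₀ = A / D^2 := rfl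
  have huw : w x₀ < u x₀ := by linarith
  have hwpos : 0 < w x₀ := by rw [hwx₀]; positivity
  have hcA : c * A = 4*(n+6)*ρ := by
    rw [hA_def]
    field_simp
  have hs₀nonneg : 0 ≤ s x₀ := snonneg x₀
  have hDρ : D ≤ ρ := by rw [hDD]; linarith
  have hnn : (0:ℝ) ≤ (n:ℝ) := Nat.cast_nonneg n
  -- barrier inequality : n*(4A/D³) + s₀*(24A/D⁴) ≤ c*(A/D²)²
  have hbarrier : (n:ℝ) * (2*(2*A/D^3)) + (s x₀) * (4*(6*A/D^4)) ≤ c * (A/D^2)^2 := by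
    have hD4 : 0 < D^4 := by positivity
    rw [div_pow, ← sub_nonneg]
    have key : c * (A^2/(D^2)^2) - ((n:ℝ) * (2*(2*A/D^3)) + (s x₀) * (4*(6*A/D^4)))
        = (c*A*A - 4*(n:ℝ)*A*D - 24*(s x₀)*A) / D^4 := by
      field_simp
      ring
    rw [key]
    apply div_nonneg _ (le_of_lt hD4)
    rw [hcA]
    nlinarith [mul_nonneg (mul_nonneg hnn hApos.le) (sub_nonneg.mpr hDρ),
      mul_nonneg hApos.le (sub_nonneg.mpr hx₀ρ.le)]
  have hfinal : c * (w x₀)^2 < c * (u x₀)^2 := by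
    apply mul_lt_mul_of_pos_left _ hc0
    nlinarith
  rw [hwx₀] at hfinal
  linarith

end Aux

/-- Yau's maximum principle argument in the unbounded case of Theorem 1.12. -/
theorem stmt6 (n : ℕ) (u : EuclideanSpace ℝ (Fin n) → ℝ)
    (hu : ContDiff ℝ (⊤ : ℕ∞) u) (hpos : ∀ x, 0 ≤ u x)
    (hunb : ¬ BddAbove (Set.range u)) (ε : ℝ) (hε : 0 < ε)
    (v : EuclideanSpace ℝ (Fin n) → ℝ)
    (hv : ∀ x, v x = 1 / Real.sqrt (u x + ε))
    (p : ℕ → EuclideanSpace ℝ (Fin n))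
    (h1 : Filter.Tendsto (fun k => v (p k)) Filter.atTop (nhds 0))
    (h2 : Filter.Tendsto (fun k => ‖gradient v (p k)‖) Filter.atTop (nhds 0))
    (h3 : 0 ≤ Filter.liminf (fun k => lap v (p k)) Filter.atTop)
    (c : ℝ) (hc : ∀ x, c * (u x) ^ 2 ≤ lap u x) :
    c ≤ 0 := by
  by_contra hc0
  push_neg at hc0
  apply hunb
  refine ⟨8*(n+6)/c, ?_⟩
  rintro _ ⟨z, rfl⟩
  set s : ℝ := ∑ i, (z i)^2 with hs_def
  have hs0 : 0 ≤ s := snonneg z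
  set ρ : ℝ := 2*s + 2 with hρ_def
  have hρpos : 0 < ρ := by linarith
  have hzρ : s < ρ := by linarith
  have := comparison u hu c ρ hc0 hρpos hc z hzρ
  rw [← hs_def] at this
  -- (4(n+6)ρ/c) / (ρ - s)² = 4(n+6)(2s+2)/(c(s+2)²) ≤ 8(n+6)/c
  have hρs : ρ - s = s + 2 := by rw [hρ_def]; ring
  rw [hρs] at this
  refine le_trans this ?_
  rw [div_div, div_le_div_iff₀ (by positivity) hc0]
  have hnn : (0:ℝ) ≤ (n:ℝ) := Nat.cast_nonneg n
  have key : (0:ℝ) ≤ ((n:ℝ)+6) * c * (s^2+3*s+3) := by positivity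
  rw [hρ_def]
  nlinarith [key]
end
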